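/- In the setting of the construction lemma with ν bijective, the right action on the generators is given by γⁱ·a = Σⱼ ν⁻¹(a₍₁₎)·r(ψⁱⱼ ⊗ S(a₍₂₎))·γʲ, and γ¹,…,γᴺ is also a basis of Γ as a left B-module. -/
import Mathlib


open TensorProduct

noncomputable section

variable (A : Type) [Ring A] [HopfAlgebra ℂ A]

/-- Convolution of two functionals on the coalgebra `A`. -/
def convF (f g : A →ₗ[ℂ] ℂ) : A →ₗ[ℂ] ℂ :=
  LinearMap.mul' ℂ ℂ ∘ₗ (TensorProduct.map f g) ∘ₗ Coalgebra.comul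

/-- `a ⊗ b ↦ Σ r(a₍₁₎ ⊗ b₍₁₎) a₍₂₎b₍₂₎`. -/
def rIntertwineL (rr : A →ₗ[ℂ] A →ₗ[ℂ] ℂ) : A ⊗[ℂ] A →ₗ[ℂ] A :=
  (TensorProduct.lid ℂ A).toLinearMap ∘ₗ
    (TensorProduct.map (TensorProduct.lift rr) (LinearMap.mul' ℂ A)) ∘ₗ
    (TensorProduct.tensorTensorTensorComm ℂ A A A A).toLinearMap ∘ₗ
    (TensorProduct.map (Coalgebra.comul (R := ℂ)) (Coalgebra.comul (R := ℂ)))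

/-- `a ⊗ b ↦ Σ b₍₁₎a₍₁₎ r(a₍₂₎ ⊗ b₍₂₎)`. -/
def rIntertwineR (rr : A →ₗ[ℂ] A →ₗ[ℂ] ℂ) : A ⊗[ℂ] A →ₗ[ℂ] A :=
  (TensorProduct.rid ℂ A).toLinearMap ∘ₗ
    (TensorProduct.map
      ((LinearMap.mul' ℂ A) ∘ₗ (TensorProduct.comm ℂ A A).toLinearMap)
      (TensorProduct.lift rr)) ∘ₗ
    (TensorProduct.tensorTensorTensorComm ℂ A A A A).toLinearMap ∘ₗ
    (TensorProduct.map (Coalgebra.comul (R := ℂ)) (Coalgebra.comul (R := ℂ)))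

/-- `A` is coquasitriangular with universal r-form `rr`. -/
def IsRForm (rr : A →ₗ[ℂ] A →ₗ[ℂ] ℂ) : Prop :=
  rIntertwineL A rr = rIntertwineR A rr ∧
  (∀ a b c : A, rr (a * b) c = convF A (rr a) (rr b) c) ∧
  (∀ c : A, rr 1 c = Coalgebra.counit (R := ℂ) c) ∧
  (∀ a b c : A, rr a (b * c) = convF A (rr.flip c) (rr.flip b) a) ∧
  (∀ a : A, rr a 1 = Coalgebra.counit (R := ℂ) a)

variable (B : Type) [Ring B] [Algebra ℂ B]

/-- `Σ μ(a₍₁₎) r'(ψ ⊗ a₍₂₎)` for a linear form `rr'` and an algebra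
endomorphism `μ` of `B`, expressed through the right coaction `ρB`. -/
def coeffL (ρB : B →ₗ[ℂ] B ⊗[ℂ] A) (rr' : A →ₗ[ℂ] A →ₗ[ℂ] ℂ)
    (μ : B →ₐ[ℂ] B) (ψji : A) (a : B) : B :=
  TensorProduct.lift
    (LinearMap.mk₂ ℂ (fun (b' : B) (x : A) => rr' ψji x • μ b')
      (fun b b' x => by simp)
      (fun c b x => by
        show rr' ψji x • μ (c • b) = c • (rr' ψji x • μ b)
        rw [map_smul]; exact smul_comm _ _ _)
      (fun b x x' => by simp [add_smul])
      (fun c b x => by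
        show rr' ψji (c • x) • μ b = c • (rr' ψji x • μ b)
        rw [map_smul, smul_assoc]))
    (ρB a)

namespace CLaux

/-- `b ⊗ x ↦ f x • μ b`. -/
def Cf (f : A →ₗ[ℂ] ℂ) (μ : B →ₗ[ℂ] B) : B ⊗[ℂ] A →ₗ[ℂ] B :=
  μ ∘ₗ (TensorProduct.rid ℂ B).toLinearMap ∘ₗ TensorProduct.map LinearMap.id f

@[simp] lemma Cf_tmul (f : A →ₗ[ℂ] ℂ) (μ : B →ₗ[ℂ] B) (b : B) (x : A) :
    Cf A B f μ (b ⊗ₜ[ℂ] x) = f x • μ b := by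
  simp [Cf]

/-- `b ⊗ t ↦ q t • b`. -/
def Cf2 (q : A ⊗[ℂ] A →ₗ[ℂ] ℂ) : B ⊗[ℂ] (A ⊗[ℂ] A) →ₗ[ℂ] B :=
  (TensorProduct.rid ℂ B).toLinearMap ∘ₗ TensorProduct.map LinearMap.id q

@[simp] lemma Cf2_tmul (q : A ⊗[ℂ] A →ₗ[ℂ] ℂ) (b : B) (t : A ⊗[ℂ] A) :
    Cf2 A B q (b ⊗ₜ[ℂ] t) = q t • b := by
  simp [Cf2]

/-- `y ⊗ z ↦ g y * f z`. -/
def qf (g f : A →ₗ[ℂ] ℂ) : A ⊗[ℂ] A →ₗ[ℂ] ℂ :=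
  LinearMap.mul' ℂ ℂ ∘ₗ TensorProduct.map g f

@[simp] lemma qf_tmul (g f : A →ₗ[ℂ] ℂ) (y z : A) :
    qf A g f (y ⊗ₜ[ℂ] z) = g y * f z := by
  simp [qf]

lemma coeffL_eq (ρB : B →ₗ[ℂ] B ⊗[ℂ] A) (rr' : A →ₗ[ℂ] A →ₗ[ℂ] ℂ)
    (μ : B →ₐ[ℂ] B) (ψji : A) (a : B) :
    coeffL A B ρB rr' μ ψji a = Cf A B (rr' ψji) μ.toLinearMap (ρB a) := by
  unfold coeffL
  generalize ρB a = t
  induction t using TensorProduct.induction_on with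
  | zero => simp
  | tmul b x => simp
  | add s t hs ht => simp only [map_add, hs, ht]

set_option synthInstance.maxHeartbeats 400000 in
lemma composite (ρB : B →ₗ[ℂ] B ⊗[ℂ] A)
    (hρ_coassoc : ∀ x : B,
      (TensorProduct.map LinearMap.id (Coalgebra.comul (R := ℂ))) (ρB x)
        = (TensorProduct.assoc ℂ B A A)
            ((TensorProduct.map ρB LinearMap.id) (ρB x)))
    (f g : A →ₗ[ℂ] ℂ) (μ₁ μ₂ : B →ₗ[ℂ] B)
    (hμ : ∀ x, μ₂ (μ₁ x) = x)
    (hμ₁ : ∀ x, ρB (μ₁ x) = TensorProduct.map μ₁ LinearMap.id (ρB x)) (a : B) :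
    Cf A B g μ₂ (ρB (Cf A B f μ₁ (ρB a)))
      = Cf2 A B (qf A g f)
          (TensorProduct.map LinearMap.id (Coalgebra.comul (R := ℂ)) (ρB a)) := by
  have h1 : ρB (Cf A B f μ₁ (ρB a)) =
      (TensorProduct.map μ₁ LinearMap.id ∘ₗ
        (TensorProduct.rid ℂ (B ⊗[ℂ] A)).toLinearMap ∘ₗ
        TensorProduct.map LinearMap.id f)
      (TensorProduct.map ρB LinearMap.id (ρB a)) := by
    generalize ρB a = t
    induction t using TensorProduct.induction_on with
    | zero => simp only [map_zero]
    | tmul b x => simp [hμ₁]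
    | add s t hs ht => simp only [map_add, hs, ht]
  have h2 : TensorProduct.map ρB LinearMap.id (ρB a)
      = (TensorProduct.assoc ℂ B A A).symm
          (TensorProduct.map LinearMap.id (Coalgebra.comul (R := ℂ)) (ρB a)) := by
    rw [hρ_coassoc a, LinearEquiv.symm_apply_apply]
  rw [h1, h2]
  generalize (TensorProduct.map LinearMap.id (Coalgebra.comul (R := ℂ)) (ρB a)) = t
  induction t using TensorProduct.induction_on with
  | zero => simp only [map_zero]
  | tmul b w =>
      induction w using TensorProduct.induction_on with
      | zero => simp only [TensorProduct.tmul_zero, map_zero]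
      | tmul y z =>
          simp [TensorProduct.assoc_symm_tmul, hμ, smul_smul, mul_comm]
      | add u v hu hv =>
          simp only [TensorProduct.tmul_add, map_add, hu, hv]
  | add s t hs ht => simp only [map_add, hs, ht]

lemma Kcontract (ρB : B →ₗ[ℂ] B ⊗[ℂ] A)
    (hρ_counit : ∀ x : B, (TensorProduct.rid ℂ B)
      ((TensorProduct.map LinearMap.id (Coalgebra.counit (R := ℂ))) (ρB x)) = x)
    (h₂ : A ⊗[ℂ] A →ₗ[ℂ] ℂ) (c : ℂ)
    (hc : ∀ w : A, h₂ (Coalgebra.comul (R := ℂ) w) = c * Coalgebra.counit (R := ℂ) w)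
    (a : B) :
    Cf2 A B h₂ (TensorProduct.map LinearMap.id (Coalgebra.comul (R := ℂ)) (ρB a))
      = c • a := by
  have key : ∀ t : B ⊗[ℂ] A,
      Cf2 A B h₂ (TensorProduct.map LinearMap.id (Coalgebra.comul (R := ℂ)) t)
      = c • (TensorProduct.rid ℂ B)
          ((TensorProduct.map LinearMap.id (Coalgebra.counit (R := ℂ))) t) := by
    intro t
    induction t using TensorProduct.induction_on with
    | zero => simp
    | tmul b w => simp [hc, mul_smul]
    | add s t hs ht => simp only [map_add, hs, ht, smul_add]
  rw [key (ρB a), hρ_counit a]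

lemma Cf2_sum {ι : Type} (s : Finset ι) (Q : ι → (A ⊗[ℂ] A →ₗ[ℂ] ℂ))
    (t : B ⊗[ℂ] (A ⊗[ℂ] A)) :
    ∑ j ∈ s, Cf2 A B (Q j) t = Cf2 A B (∑ j ∈ s, Q j) t := by
  induction t using TensorProduct.induction_on with
  | zero => simp
  | tmul b w => simp [LinearMap.sum_apply, Finset.sum_smul]
  | add u v hu hv => simp only [map_add, hu, hv, Finset.sum_add_distrib]

lemma exists_dual {N : ℕ} {bv : Fin N → B} (hbv : LinearIndependent ℂ bv) :
    ∃ φ : Fin N → (B →ₗ[ℂ] ℂ), ∀ i j, φ i (bv j) = if i = j then 1 else 0 := by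
  set F : (Fin N → ℂ) →ₗ[ℂ] B :=
    LinearMap.lsum ℂ (fun _ ↦ ℂ) ℕ fun i ↦ LinearMap.id.smulRight (bv i) with hF
  have hker : LinearMap.ker F = ⊥ := (Fintype.linearIndependent_iff'.1 hbv)
  obtain ⟨g, hg⟩ := F.exists_leftInverse_of_injective hker
  refine ⟨fun i => LinearMap.proj i ∘ₗ g, fun i j => ?_⟩
  have h1 : F (Pi.single j 1) = bv j := by
    simp [hF, LinearMap.lsum_apply, Pi.single_apply, ite_smul]
  have h2 : g (bv j) = Pi.single j 1 := by
    rw [← h1]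
    exact LinearMap.congr_fun hg (Pi.single j 1)
  simp [h2, Pi.single_apply, eq_comm]

end CLaux

set_option maxHeartbeats 1000000 in
set_option synthInstance.maxHeartbeats 400000 in
set_option maxRecDepth 8000 in
/-- In the setting of the construction lemma (coquasitriangular
Hopf algebra `A` with r-form `rr`, right comodule algebra `B`, linearly
independent `b₁,…,b_N` with `ρB(bᵢ) = Σⱼ bⱼ ⊗ ψʲᵢ`, and `Γ` the bimodule on
`Fin N → B` with right-module basis `γʲ = Pi.single j 1` and left action
given by the relations `a·γʲ = Σᵢ γⁱ·ν(a₍₁₎)·r(ψʲᵢ ⊗ a₍₂₎)`), if the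
comodule algebra endomorphism `ν` is *bijective*, then the right action on
the generators is `γⁱ·a = Σⱼ ν⁻¹(a₍₁₎)·r(ψⁱⱼ ⊗ S(a₍₂₎))·γʲ`, and
`γ¹,…,γᴺ` is also a basis of `Γ` as a left `B`-module. -/
theorem construction_lemma_left_basis
    (rr : A →ₗ[ℂ] A →ₗ[ℂ] ℂ) (hr : IsRForm A rr)
    (ρB : B →ₗ[ℂ] B ⊗[ℂ] A)
    (hρ_mul : ∀ x y : B, ρB (x * y) = ρB x * ρB y)
    (hρ_one : ρB 1 = 1)
    (hρ_counit : ∀ x : B, (TensorProduct.rid ℂ B)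
      ((TensorProduct.map LinearMap.id (Coalgebra.counit (R := ℂ))) (ρB x)) = x)
    (hρ_coassoc : ∀ x : B,
      (TensorProduct.map LinearMap.id (Coalgebra.comul (R := ℂ))) (ρB x)
        = (TensorProduct.assoc ℂ B A A)
            ((TensorProduct.map ρB LinearMap.id) (ρB x)))
    (N : ℕ) (bv : Fin N → B) (hbv : LinearIndependent ℂ bv)
    (ψ : Fin N → Fin N → A)
    (hψ : ∀ i, ρB (bv i) = ∑ j, bv j ⊗ₜ[ℂ] ψ j i)
    (ν : B ≃ₐ[ℂ] B)
    (hν : ∀ x : B, ρB (ν x)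
      = (TensorProduct.map ν.toAlgHom.toLinearMap LinearMap.id) (ρB x))
    -- the bimodule `Γ` of the construction lemma:
    (Lact : B →ₗ[ℂ] (Fin N → B) →ₗ[ℂ] (Fin N → B))
    (hL_mul : ∀ a b v, Lact (a * b) v = Lact a (Lact b v))
    (hL_one : ∀ v, Lact 1 v = v)
    (hL_rcomm : ∀ a c v, Lact a (fun i => v i * c) = fun i => (Lact a v) i * c)
    (hL_rel : ∀ a j, Lact a (Pi.single j (1 : B))
      = fun i => coeffL A B ρB rr ν.toAlgHom (ψ j i) a) :
    -- the right action on the generators `γⁱ·a = Σⱼ ν⁻¹(a₍₁₎)·r(ψⁱⱼ ⊗ S(a₍₂₎))·γʲ`: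
    (∀ (a : B) (i : Fin N),
      (fun k : Fin N => (Pi.single i (1 : B) : Fin N → B) k * a)
        = ∑ j, Lact
            (coeffL A B ρB
              (rr.compl₂ (HopfAlgebra.antipode (R := ℂ) (A := A)))
              ν.symm.toAlgHom (ψ i j) a)
            (Pi.single j (1 : B))) ∧
    -- `γ` is a basis of `Γ` as a left `B`-module:
    Function.Bijective
      (fun v : Fin N → B => ∑ j, Lact (v j) (Pi.single j (1 : B))) := by
  classical
  obtain ⟨hr1, hr2, hr3, hr4, hr5⟩ := hr
  set rrS : A →ₗ[ℂ] A →ₗ[ℂ] ℂ :=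
    rr.compl₂ (HopfAlgebra.antipode (R := ℂ) (A := A)) with hrrS
  obtain ⟨φ, hφ⟩ := CLaux.exists_dual B hbv
  -- counit of the matrix coefficients
  have hεψ : ∀ i k, Coalgebra.counit (R := ℂ) (ψ i k) = if i = k then 1 else 0 := by
    intro i k
    have h := hρ_counit (bv k)
    rw [hψ k] at h
    have h' : ∑ j, Coalgebra.counit (R := ℂ) (ψ j k) • bv j = bv k := by
      simpa [map_sum, TensorProduct.map_tmul, TensorProduct.rid_tmul] using h
    have h2 := congrArg (φ i) h'
    rw [map_sum] at h2
    simpa [hφ, mul_ite, Finset.sum_ite_eq] using h2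
  -- comultiplication of the matrix coefficients
  have hΔψ : ∀ i k, Coalgebra.comul (R := ℂ) (ψ i k) = ∑ j, ψ i j ⊗ₜ[ℂ] ψ j k := by
    intro i k
    have h := hρ_coassoc (bv k)
    rw [hψ k] at h
    have h' : ∑ j, bv j ⊗ₜ[ℂ] (Coalgebra.comul (R := ℂ) (ψ j k))
        = ∑ j, ∑ l, bv l ⊗ₜ[ℂ] (ψ l j ⊗ₜ[ℂ] ψ j k) := by
      simpa [map_sum, TensorProduct.map_tmul, hψ, TensorProduct.sum_tmul,
        TensorProduct.assoc_tmul] using h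
    have h2 := congrArg (fun t => (TensorProduct.lid ℂ (A ⊗[ℂ] A))
        (TensorProduct.map (φ i) LinearMap.id t)) h'
    simpa [map_sum, TensorProduct.map_tmul, TensorProduct.lid_tmul, hφ,
      ite_smul, Finset.sum_ite_eq] using h2
  -- ν.symm is a comodule map
  have hν' : ∀ x : B, ρB (ν.symm.toAlgHom.toLinearMap x)
      = TensorProduct.map ν.symm.toAlgHom.toLinearMap LinearMap.id (ρB x) := by
    intro x
    have h : ρB x = TensorProduct.map ν.toAlgHom.toLinearMap LinearMap.id
        (ρB (ν.symm x)) := by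
      have := hν (ν.symm x)
      rw [ν.apply_symm_apply] at this
      exact this
    rw [h]
    show ρB (ν.symm x) = _
    generalize ρB (ν.symm x) = t
    induction t using TensorProduct.induction_on with
    | zero => simp only [map_zero]
    | tmul b y =>
        simp only [TensorProduct.map_tmul]
        congr 1
        exact (ν.symm_apply_apply b).symm
    | add s t hs ht => rw [map_add, map_add, ← hs, ← ht]
  have hνlm : ∀ x : B, ρB (ν.toAlgHom.toLinearMap x)
      = TensorProduct.map ν.toAlgHom.toLinearMap LinearMap.id (ρB x) := fun x => hν x
  -- key identity 1
  have K1 : ∀ (a : B) (i k : Fin N),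
      (∑ j, CLaux.Cf A B (rr (ψ j k)) ν.toAlgHom.toLinearMap
          (ρB (CLaux.Cf A B (rrS (ψ i j)) ν.symm.toAlgHom.toLinearMap (ρB a))))
        = (if i = k then (1:ℂ) else 0) • a := by
    intro a i k
    have hstep : ∀ j : Fin N, CLaux.Cf A B (rr (ψ j k)) ν.toAlgHom.toLinearMap
          (ρB (CLaux.Cf A B (rrS (ψ i j)) ν.symm.toAlgHom.toLinearMap (ρB a)))
        = CLaux.Cf2 A B (CLaux.qf A (rr (ψ j k)) (rrS (ψ i j)))
            (TensorProduct.map LinearMap.id (Coalgebra.comul (R := ℂ)) (ρB a)) :=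
      fun j => CLaux.composite A B ρB hρ_coassoc _ _ _ _
        (fun x => ν.apply_symm_apply x) hν' a
    rw [Finset.sum_congr rfl fun j _ => hstep j, CLaux.Cf2_sum]
    refine CLaux.Kcontract A B ρB hρ_counit _ _ (fun w => ?_) a
    have hsum : (∑ j, CLaux.qf A (rr (ψ j k)) (rrS (ψ i j)))
        = rr (ψ i k) ∘ₗ LinearMap.mul' ℂ A ∘ₗ
            LinearMap.lTensor A (HopfAlgebra.antipode (R := ℂ)) := by
      apply TensorProduct.ext'
      intro y z
      rw [LinearMap.sum_apply]
      simp only [CLaux.qf_tmul, LinearMap.comp_apply, LinearMap.lTensor_tmul,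
        LinearMap.mul'_apply]
      rw [hr4 (ψ i k) y (HopfAlgebra.antipode (R := ℂ) z)]
      unfold convF
      rw [LinearMap.comp_apply, LinearMap.comp_apply, hΔψ i k, map_sum, map_sum]
      simp only [TensorProduct.map_tmul, LinearMap.mul'_apply, LinearMap.flip_apply]
      refine Finset.sum_congr rfl fun j _ => ?_
      rw [hrrS]
      simp only [LinearMap.compl₂_apply]
      ring
    rw [hsum, LinearMap.comp_apply, LinearMap.comp_apply,
      HopfAlgebra.mul_antipode_lTensor_comul_apply,
      Algebra.algebraMap_eq_smul_one, map_smul, smul_eq_mul, hr5, hεψ i k]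
    ring
  -- key identity 2
  have K2 : ∀ (a : B) (k j : Fin N),
      (∑ i, CLaux.Cf A B (rrS (ψ i j)) ν.symm.toAlgHom.toLinearMap
          (ρB (CLaux.Cf A B (rr (ψ k i)) ν.toAlgHom.toLinearMap (ρB a))))
        = (if k = j then (1:ℂ) else 0) • a := by
    intro a k j
    have hstep : ∀ i : Fin N, CLaux.Cf A B (rrS (ψ i j)) ν.symm.toAlgHom.toLinearMap
          (ρB (CLaux.Cf A B (rr (ψ k i)) ν.toAlgHom.toLinearMap (ρB a)))
        = CLaux.Cf2 A B (CLaux.qf A (rrS (ψ i j)) (rr (ψ k i)))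
            (TensorProduct.map LinearMap.id (Coalgebra.comul (R := ℂ)) (ρB a)) :=
      fun i => CLaux.composite A B ρB hρ_coassoc _ _ _ _
        (fun x => ν.symm_apply_apply x) hνlm a
    rw [Finset.sum_congr rfl fun i _ => hstep i, CLaux.Cf2_sum]
    refine CLaux.Kcontract A B ρB hρ_counit _ _ (fun w => ?_) a
    have hsum : (∑ i, CLaux.qf A (rrS (ψ i j)) (rr (ψ k i)))
        = rr (ψ k j) ∘ₗ LinearMap.mul' ℂ A ∘ₗ
            LinearMap.rTensor A (HopfAlgebra.antipode (R := ℂ)) := by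
      apply TensorProduct.ext'
      intro y z
      rw [LinearMap.sum_apply]
      simp only [CLaux.qf_tmul, LinearMap.comp_apply, LinearMap.rTensor_tmul,
        LinearMap.mul'_apply]
      rw [hr4 (ψ k j) (HopfAlgebra.antipode (R := ℂ) y) z]
      unfold convF
      rw [LinearMap.comp_apply, LinearMap.comp_apply, hΔψ k j, map_sum, map_sum]
      simp only [TensorProduct.map_tmul, LinearMap.mul'_apply, LinearMap.flip_apply]
      refine Finset.sum_congr rfl fun i _ => ?_
      rw [hrrS]
      simp only [LinearMap.compl₂_apply]
      ring
    rw [hsum, LinearMap.comp_apply, LinearMap.comp_apply,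
      HopfAlgebra.mul_antipode_rTensor_comul_apply,
      Algebra.algebraMap_eq_smul_one, map_smul, smul_eq_mul, hr5, hεψ k j]
    ring
  -- part 1
  have part1 : ∀ (a : B) (i : Fin N),
      (fun k : Fin N => (Pi.single i (1 : B) : Fin N → B) k * a)
        = ∑ j, Lact (coeffL A B ρB rrS ν.symm.toAlgHom (ψ i j) a)
            (Pi.single j (1 : B)) := by
    intro a i
    funext k
    rw [Finset.sum_apply]
    have hval : ∀ j : Fin N,
        (Lact (coeffL A B ρB rrS ν.symm.toAlgHom (ψ i j) a) (Pi.single j (1 : B))) k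
          = coeffL A B ρB rr ν.toAlgHom (ψ j k)
              (coeffL A B ρB rrS ν.symm.toAlgHom (ψ i j) a) := fun j => by
      rw [hL_rel]
    rw [Finset.sum_congr rfl fun j _ => hval j]
    simp only [CLaux.coeffL_eq]
    rw [K1 a i k]
    by_cases h : i = k
    · subst h; simp
    · simp [Pi.single_apply, h, Ne.symm h]
  refine ⟨part1, ?_⟩
  rw [Function.bijective_iff_has_inverse]
  refine ⟨fun w j => ∑ i, coeffL A B ρB rrS ν.symm.toAlgHom (ψ i j) (w i), ?_, ?_⟩
  · -- left inverse
    intro v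
    funext j
    show (∑ i, coeffL A B ρB rrS ν.symm.toAlgHom (ψ i j)
        ((∑ kk, Lact (v kk) (Pi.single kk (1 : B))) i)) = v j
    have hFv : ∀ i : Fin N, ((∑ kk, Lact (v kk) (Pi.single kk (1 : B))) i)
        = ∑ kk, coeffL A B ρB rr ν.toAlgHom (ψ kk i) (v kk) := by
      intro i
      rw [Finset.sum_apply]
      exact Finset.sum_congr rfl fun kk _ => by rw [hL_rel]
    have hstep : ∀ i : Fin N, coeffL A B ρB rrS ν.symm.toAlgHom (ψ i j)
        ((∑ kk, Lact (v kk) (Pi.single kk (1 : B))) i)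
        = ∑ kk, CLaux.Cf A B (rrS (ψ i j)) ν.symm.toAlgHom.toLinearMap
            (ρB (CLaux.Cf A B (rr (ψ kk i)) ν.toAlgHom.toLinearMap (ρB (v kk)))) := by
      intro i
      rw [hFv i, CLaux.coeffL_eq, map_sum, map_sum]
      exact Finset.sum_congr rfl fun kk _ => by rw [CLaux.coeffL_eq]
    rw [Finset.sum_congr rfl fun i _ => hstep i, Finset.sum_comm]
    rw [Finset.sum_congr rfl fun kk _ => K2 (v kk) kk j]
    simp [ite_smul, Finset.sum_ite_eq']
  · -- right inverse
    intro w
    show (∑ j, Lact (∑ i, coeffL A B ρB rrS ν.symm.toAlgHom (ψ i j) (w i))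
        (Pi.single j (1 : B))) = w
    have hlin : ∀ j : Fin N,
        Lact (∑ i, coeffL A B ρB rrS ν.symm.toAlgHom (ψ i j) (w i))
            (Pi.single j (1 : B))
          = ∑ i, Lact (coeffL A B ρB rrS ν.symm.toAlgHom (ψ i j) (w i))
              (Pi.single j (1 : B)) := by
      intro j
      rw [map_sum, LinearMap.sum_apply]
    rw [Finset.sum_congr rfl fun j _ => hlin j, Finset.sum_comm]
    rw [Finset.sum_congr rfl fun i _ => (part1 (w i) i).symm]
    funext k
    rw [Finset.sum_apply]
    simp [Pi.single_apply, ite_mul]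


end
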